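/- Let G_n = P_n □ C_4. Then the sequence n ↦ R_{G_n}[(a_1,b_1),(a_n,b_3)] is strictly increasing: R_{G_{n+1}}[(a_1,b_1),(a_{n+1},b_3)] > R_{G_n}[(a_1,b_1),(a_n,b_3)] for all n ≥ 2. -/

import Mathlib

open Matrix Finset

open Classical in
/-- The Moore–Penrose pseudoinverse of a real square matrix, defined via the
four Penrose conditions (it is unique when it exists). -/
noncomputable def Matrix.mpinv {m : Type*} [Fintype m] [DecidableEq m]
    (A : Matrix m m ℝ) : Matrix m m ℝ :=
  if h : ∃ B : Matrix m m ℝ,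
      A * B * A = A ∧ B * A * B = B ∧ (A * B)ᵀ = A * B ∧ (B * A)ᵀ = B * A
  then h.choose else 0

/-- Effective resistance between `u` and `v` with respect to a (weighted)
Laplacian matrix `L`:  `(e_u - e_v)ᵀ L⁺ (e_u - e_v)`. -/
noncomputable def effRes {m : Type*} [Fintype m] [DecidableEq m]
    (L : Matrix m m ℝ) (u v : m) : ℝ :=
  (Pi.single u 1 - Pi.single v 1) ⬝ᵥ (L.mpinv *ᵥ (Pi.single u 1 - Pi.single v 1))

/-- The (real) Laplacian matrix of a simple graph. -/
noncomputable def lapm {V : Type*} [Fintype V] [DecidableEq V]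
    (G : SimpleGraph V) : Matrix V V ℝ :=
  letI := Classical.decRel G.Adj
  G.lapMatrix ℝ

/-- Resistance distance between two vertices of a simple graph. -/
noncomputable def resDist {V : Type*} [Fintype V] [DecidableEq V]
    (G : SimpleGraph V) (u v : V) : ℝ :=
  effRes (lapm G) u v

/-- Resistance diameter of a simple graph. -/
noncomputable def resDiam {V : Type*} [Fintype V] [DecidableEq V]
    (G : SimpleGraph V) : ℝ :=
  ⨆ p : V × V, resDist G p.1 p.2

/-- The weighted Laplacian of the cone over `G` with apex `Sum.inr ()`:
edges of `G` have conductance `1` (unit resistance), and each vertex of `G`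
is joined to the apex by an edge of conductance `m` (resistance `1/m`). -/
noncomputable def coneLap {V : Type*} [Fintype V] [DecidableEq V]
    (G : SimpleGraph V) (m : ℝ) : Matrix (V ⊕ Unit) (V ⊕ Unit) ℝ :=
  letI := Classical.decRel G.Adj
  let W : Matrix (V ⊕ Unit) (V ⊕ Unit) ℝ := fun i j =>
    match i, j with
    | Sum.inl a, Sum.inl b => if G.Adj a b then 1 else 0
    | Sum.inl _, Sum.inr _ => m
    | Sum.inr _, Sum.inl _ => m
    | Sum.inr _, Sum.inr _ => 0
  Matrix.of fun i j => (if i = j then ∑ k, W i k else 0) - W i j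

/-- The `k`-dimensional hypercube graph `Q_k`. -/
def hypercube (k : ℕ) : SimpleGraph (Fin k → Bool) where
  Adj x y := (Finset.univ.filter fun i => x i ≠ y i).card = 1
  symm := by
    constructor
    intro x y h
    rw [← h]
    congr 1
    ext i
    simp [ne_comm]
  loopless := by constructor; intro x; simp

/-- The join `G + H` of two graphs on disjoint vertex sets. -/
def graphJoin {V W : Type*} (G : SimpleGraph V) (H : SimpleGraph W) :
    SimpleGraph (V ⊕ W) where
  Adj x y :=
    match x, y with
    | Sum.inl a, Sum.inl b => G.Adj a b
    | Sum.inr a, Sum.inr b => H.Adj a b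
    | Sum.inl _, Sum.inr _ => True
    | Sum.inr _, Sum.inl _ => True
  symm := by
    constructor
    rintro (a | a) (b | b) h
    · exact G.adj_symm h
    · trivial
    · trivial
    · exact H.adj_symm h
  loopless := by
    constructor
    rintro (a | a) h
    · exact G.loopless.irrefl a h
    · exact H.loopless.irrefl a h

/-!
For a symmetric `L`, a potential `y` with `L y = e_u - e_v` gives `effRes L u v = y u - y v`:
only `L L⁺ L = L` is needed, and a pseudoinverse of a symmetric matrix comes from the spectral
theorem. On `P_N □ C_4` the potential separates, because the Laplacian sends `f ⊗ φ` to
`(L_{P_N} + λ) f ⊗ φ` when `φ` is a `λ`-eigenvector of `L_{C_4}`. Expanding the source in the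
eigenvectors of `C_4` for `λ = 0, 2, 4` leaves three problems on the path, solved by a linear
function and by combinations of `q ^ j` and `q ^ (N - 1 - j)` with `q + q⁻¹ = 2 + λ`, that is
`r = 2 - √3` and `s = 3 - 2√2`. This gives `R_N = (N - 1) / 4 + E_N + O_N / 2`, where the end
values `E_N`, `O_N` of the two exponential profiles satisfy `r / (1 - r) < E_N ≤ r / (1 - r) ^ 2`
and `0 ≤ O_N < s / (1 - s)`, so
`R_{N+1} - R_N > 1 / 4 - (2 - √3) / 2 - (√2 - 1) / 4 > 0`.
-/

theorem Matrix.IsSymm.exists_penrose_inverse {n : Type*} [Fintype n] [DecidableEq n]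
    {A : Matrix n n ℝ} (hA : A.IsSymm) :
    ∃ B : Matrix n n ℝ,
      A * B * A = A ∧ B * A * B = B ∧ (A * B)ᵀ = A * B ∧ (B * A)ᵀ = B * A := by
  have hH : A.IsHermitian := by
    rwa [IsHermitian, conjTranspose_eq_transpose_of_trivial]
  set U : Matrix n n ℝ := (hH.eigenvectorUnitary : Matrix n n ℝ)
  have hUU : Uᵀ * U = 1 := by
    simpa [U, star_eq_conjTranspose, conjTranspose_eq_transpose_of_trivial] using
      Unitary.coe_star_mul_self hH.eigenvectorUnitary
  let conj (d : n → ℝ) : Matrix n n ℝ := U * diagonal d * Uᵀ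
  have conj_mul (d e : n → ℝ) : conj d * conj e = conj (d * e) := by
    simp only [conj, Matrix.mul_assoc, ← Matrix.mul_assoc Uᵀ U, hUU, Matrix.one_mul,
      ← Matrix.mul_assoc (diagonal d), diagonal_mul_diagonal]
    rfl
  have conj_transpose (d : n → ℝ) : (conj d)ᵀ = conj d := by
    simp [conj, transpose_mul, Matrix.mul_assoc]
  have hA' : A = conj hH.eigenvalues := by
    conv_lhs => rw [hH.spectral_theorem]
    simp [conj, U, Unitary.conjStarAlgAut_apply, star_eq_conjTranspose,
      conjTranspose_eq_transpose_of_trivial]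
  -- `0⁻¹ = 0` makes `diagonal λ⁻¹` the pseudoinverse of `diagonal λ`, kernel included.
  refine ⟨conj hH.eigenvalues⁻¹, ?_, ?_, ?_, ?_⟩ <;> simp only [hA', conj_mul, conj_transpose]
  · congr 1; ext i; exact mul_inv_mul_cancel _
  · congr 1; ext i; simpa using mul_inv_mul_cancel (hH.eigenvalues i)⁻¹

theorem Matrix.IsSymm.mul_mpinv_mul_self {n : Type*} [Fintype n] [DecidableEq n]
    {A : Matrix n n ℝ} (hA : A.IsSymm) : A * A.mpinv * A = A := by
  rw [Matrix.mpinv, dif_pos hA.exists_penrose_inverse]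
  exact hA.exists_penrose_inverse.choose_spec.1

theorem effRes_eq_sub_of_mulVec_eq {m : Type*} [Fintype m] [DecidableEq m]
    {L : Matrix m m ℝ} (hL : L.IsSymm) {u v : m} {y : m → ℝ}
    (hy : L *ᵥ y = Pi.single u 1 - Pi.single v 1) :
    effRes L u v = y u - y v :=
  calc effRes L u v = (L *ᵥ y) ⬝ᵥ (L.mpinv *ᵥ (L *ᵥ y)) := by rw [effRes, hy]
    _ = y ⬝ᵥ ((L * L.mpinv * L) *ᵥ y) := by
      rw [← mulVec_mulVec, ← mulVec_mulVec, dotProduct_mulVec y L, ← mulVec_transpose, hL.eq]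
    _ = y u - y v := by
      rw [hL.mul_mpinv_mul_self, hy, dotProduct_sub, dotProduct_single, dotProduct_single,
        mul_one, mul_one]

theorem resDist_eq_sub_of_mulVec_eq {V : Type*} [Fintype V] [DecidableEq V]
    {G : SimpleGraph V} {u v : V} {y : V → ℝ}
    (hy : lapm G *ᵥ y = Pi.single u 1 - Pi.single v 1) :
    resDist G u v = y u - y v := by
  classical
  exact effRes_eq_sub_of_mulVec_eq (G.isSymm_lapMatrix ℝ) hy

open Classical in
theorem lapm_mulVec_apply {V : Type*} [Fintype V] [DecidableEq V]
    (G : SimpleGraph V) (y : V → ℝ) (v : V) :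
    (lapm G *ᵥ y) v = ∑ w, if G.Adj v w then y v - y w else 0 := by
  rw [lapm, SimpleGraph.lapMatrix_mulVec_apply, ← Finset.sum_filter,
    ← SimpleGraph.neighborFinset_eq_filter, Finset.sum_sub_distrib, Finset.sum_const,
    SimpleGraph.card_neighborFinset_eq_degree, nsmul_eq_mul]

theorem lapm_mulVec_const {V : Type*} [Fintype V] [DecidableEq V] (G : SimpleGraph V) (c : ℝ) :
    lapm G *ᵥ (fun _ => c) = 0 := by
  classical
  rw [show (fun _ : V => c) = c • fun _ => 1 from funext fun _ => (mul_one c).symm,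
    mulVec_smul, lapm, SimpleGraph.lapMatrix_mulVec_const_eq_zero, smul_zero]

theorem lapm_boxProd_mulVec_apply {α β : Type*} [Fintype α] [DecidableEq α] [Fintype β]
    [DecidableEq β] (G : SimpleGraph α) (H : SimpleGraph β) (y : α × β → ℝ) (a : α) (b : β) :
    (lapm (G □ H) *ᵥ y) (a, b)
      = (lapm G *ᵥ fun a' => y (a', b)) a + (lapm H *ᵥ fun b' => y (a, b')) b := by
  classical
  have hsplit (a' : α) (b' : β) :
      (if (G □ H).Adj (a, b) (a', b') then y (a, b) - y (a', b') else 0)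
        = (if b' = b then (if G.Adj a a' then y (a, b) - y (a', b') else 0) else 0)
          + (if a' = a then (if H.Adj b b' then y (a, b) - y (a', b') else 0) else 0) := by
    rw [SimpleGraph.boxProd_adj]
    by_cases ha : a = a' <;> by_cases hb : b = b' <;> simp [ha, hb, eq_comm]
  simp only [lapm_mulVec_apply, Fintype.sum_prod_type, hsplit, Finset.sum_add_distrib,
    Finset.sum_ite_eq', Finset.mem_univ, if_true]
  rw [Finset.sum_comm]
  simp only [Finset.sum_ite_eq', Finset.mem_univ, if_true]

theorem lapm_boxProd_mulVec_of_mulVec_eq_smul {α β : Type*} [Fintype α] [DecidableEq α]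
    [Fintype β] [DecidableEq β] (G : SimpleGraph α) {H : SimpleGraph β} {φ : β → ℝ} {μ : ℝ}
    (hφ : lapm H *ᵥ φ = μ • φ) (f : α → ℝ) :
    lapm (G □ H) *ᵥ (fun p => f p.1 * φ p.2)
      = fun p => ((lapm G *ᵥ f) p.1 + μ * f p.1) * φ p.2 := by
  ext ⟨a, b⟩
  have hf : (fun a' => f a' * φ b) = φ b • f := by ext; simp [mul_comm]
  have hg : (fun b' => f a * φ b') = f a • φ := rfl
  rw [lapm_boxProd_mulVec_apply, hf, hg, mulVec_smul, mulVec_smul, hφ]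
  simp only [Pi.smul_apply, smul_eq_mul]
  ring

theorem lapm_cycleGraph_mulVec_apply {n : ℕ} (g : Fin (n + 3) → ℝ) (b : Fin (n + 3)) :
    (lapm (SimpleGraph.cycleGraph (n + 3)) *ᵥ g) b = 2 * g b - g (b + 1) - g (b - 1) := by
  have hne : b + 1 ≠ b - 1 := by
    intro h
    have h2 : (1 + 1 : Fin (n + 3)) = 0 :=
      add_left_cancel (a := b) (by rw [← add_assoc, h, sub_add_cancel, add_zero])
    have h3 := congrArg Fin.val h2
    simp only [Fin.val_add, Fin.val_one, Fin.val_zero] at h3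
    rw [Nat.mod_eq_of_lt (by omega)] at h3
    omega
  rw [lapm_mulVec_apply]
  calc _ = ∑ w, ((if b + 1 = w then g b - g w else 0) + (if b - 1 = w then g b - g w else 0)) :=
        Finset.sum_congr rfl fun w _ => by
          rw [SimpleGraph.cycleGraph_adj]
          split_ifs <;> grind
    _ = 2 * g b - g (b + 1) - g (b - 1) := by
      simp only [Finset.sum_add_distrib, Finset.sum_ite_eq, Finset.mem_univ, if_true]
      ring

theorem lapm_cycleGraph_four_mulVec_two (c : ℝ) :
    lapm (SimpleGraph.cycleGraph 4) *ᵥ ![c, 0, -c, 0] = (2 : ℝ) • ![c, 0, -c, 0] := by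
  ext b; fin_cases b <;> simp [lapm_cycleGraph_mulVec_apply (n := 1)]

theorem lapm_cycleGraph_four_mulVec_four (c : ℝ) :
    lapm (SimpleGraph.cycleGraph 4) *ᵥ ![c, -c, c, -c] = (4 : ℝ) • ![c, -c, c, -c] := by
  ext b; fin_cases b <;> simp [lapm_cycleGraph_mulVec_apply (n := 1)] <;> ring

/-- Extended to `ℤ`, a profile on `P_N` sees the path Laplacian as the second difference
corrected by reflection terms at the two ends. -/
theorem lapm_pathGraph_mulVec_apply {N : ℕ} (f : ℤ → ℝ) (i : Fin N) :
    (lapm (SimpleGraph.pathGraph N) *ᵥ fun j : Fin N => f (j : ℕ)) i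
      = 2 * f i - f (i + 1) - f (i - 1) + (if (i : ℕ) = 0 then f (-1) - f 0 else 0)
        + (if (i : ℕ) + 1 = N then f N - f (N - 1) else 0) := by
  classical
  obtain ⟨i, hi⟩ := i
  have hsplit (j : Fin N) :
      (if (SimpleGraph.pathGraph N).Adj ⟨i, hi⟩ j then f i - f (j : ℕ) else 0)
        = (if i + 1 = j then f i - f (j : ℕ) else 0)
          + (if i = j + 1 then f i - f (j : ℕ) else 0) := by
    rw [SimpleGraph.pathGraph_adj]
    by_cases h : i + 1 = j <;> by_cases h' : i = j + 1 <;> simp [h, h', eq_comm] <;> omega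
  have hup : ∑ j ∈ range N, (if i + 1 = j then f i - f j else 0)
      = if i + 1 < N then f i - f (i + 1) else 0 := by
    simp [Finset.sum_ite_eq, Finset.mem_range]
  have hdown : ∑ j ∈ range N, (if i = j + 1 then f i - f j else 0)
      = if 0 < i then f i - f (i - 1) else 0 := by
    rcases i with _ | k
    · simp
    · simp [Finset.mem_range, show k < N by omega]
  simp only [lapm_mulVec_apply, hsplit, Finset.sum_add_distrib]
  rw [Fin.sum_univ_eq_sum_range (fun j => if i + 1 = j then f i - f j else 0),
    Fin.sum_univ_eq_sum_range (fun j => if i = j + 1 then f i - f j else 0), hup, hdown]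
  split_ifs <;> subst_vars <;> push_cast <;> ring_nf <;> omega

theorem lapm_pathGraph_mulVec_apply_of_recurrence {N : ℕ} {f : ℤ → ℝ} {c : ℝ}
    (hf : ∀ j, f (j + 1) + f (j - 1) = c * f j) (i : Fin N) :
    (lapm (SimpleGraph.pathGraph N) *ᵥ fun j : Fin N => f (j : ℕ)) i + (c - 2) * f i
      = (if (i : ℕ) = 0 then f (-1) - f 0 else 0)
        + (if (i : ℕ) + 1 = N then f N - f (N - 1) else 0) := by
  rw [lapm_pathGraph_mulVec_apply]
  linear_combination -hf i

theorem lapm_pathGraph_mulVec_linear {N : ℕ} (i : Fin N) :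
    (lapm (SimpleGraph.pathGraph N) *ᵥ fun j : Fin N => (((N : ℤ) - 1 - (j : ℕ) : ℤ) : ℝ)) i
      = (if (i : ℕ) = 0 then 1 else 0) - (if (i : ℕ) + 1 = N then 1 else 0) := by
  have h := lapm_pathGraph_mulVec_apply_of_recurrence (N := N)
    (f := fun j : ℤ => (((N : ℤ) - 1 - j : ℤ) : ℝ)) (c := 2) (fun j => by push_cast; ring) i
  simp only [sub_self, zero_mul, add_zero] at h
  rw [h]
  push_cast
  split_ifs <;> ring

/-- `q ^ j` plus `σ` times its mirror image about `N - 1/2`, scaled so that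
`f (-1) - f 0 = 1`. -/
noncomputable def pathMode (q σ : ℝ) (N : ℕ) (j : ℤ) : ℝ :=
  (q ^ j + σ * q ^ ((N : ℤ) - 1 - j)) / ((q⁻¹ - 1) * (1 - σ * q ^ N))

section pathMode

variable {q σ : ℝ} {N : ℕ}

theorem pathMode_add_one_add_pathMode_sub_one (hq : q ≠ 0) (j : ℤ) :
    pathMode q σ N (j + 1) + pathMode q σ N (j - 1) = (q + q⁻¹) * pathMode q σ N j := by
  simp only [pathMode, show (N : ℤ) - 1 - (j + 1) = (N - 1 - j) - 1 by ring,
    show (N : ℤ) - 1 - (j - 1) = (N - 1 - j) + 1 by ring, zpow_add_one₀ hq, zpow_sub_one₀ hq]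
  ring

theorem pathMode_neg_one_sub_pathMode_zero (hq : q ≠ 0) (hq₁ : q ≠ 1)
    (hσq : σ * q ^ N ≠ 1) : pathMode q σ N (-1) - pathMode q σ N 0 = 1 := by
  have h₁ : q⁻¹ - 1 ≠ 0 := by
    rw [sub_ne_zero, Ne, inv_eq_one]; exact hq₁
  have h₂ : 1 - σ * q ^ N ≠ 0 := sub_ne_zero.mpr (Ne.symm hσq)
  simp only [pathMode, _root_.zpow_neg_one, zpow_zero, sub_zero, sub_neg_eq_add, sub_add_cancel,
    zpow_natCast, zpow_sub_one₀ hq]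
  rw [div_sub_div_same, div_eq_iff (mul_ne_zero h₁ h₂)]
  ring

theorem pathMode_last_sub_pathMode (hq : q ≠ 0) (hq₁ : q ≠ 1) (hσ : σ ^ 2 = 1)
    (hσq : σ * q ^ N ≠ 1) : pathMode q σ N N - pathMode q σ N (N - 1) = σ := by
  have h₁ : q⁻¹ - 1 ≠ 0 := by
    rw [sub_ne_zero, Ne, inv_eq_one]; exact hq₁
  have h₂ : 1 - σ * q ^ N ≠ 0 := sub_ne_zero.mpr (Ne.symm hσq)
  simp only [pathMode, show (N : ℤ) - 1 - N = -1 by ring, show (N : ℤ) - 1 - (N - 1) = 0 by ring,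
    _root_.zpow_neg_one, zpow_zero, zpow_natCast, zpow_sub_one₀ hq]
  rw [div_sub_div_same, div_eq_iff (mul_ne_zero h₁ h₂)]
  linear_combination (q ^ N * q⁻¹ - q ^ N) * hσ

theorem lapm_pathGraph_mulVec_pathMode (hq₀ : 0 < q) (hq₁ : q < 1) (hσ : σ ^ 2 = 1)
    (i : Fin N) :
    (lapm (SimpleGraph.pathGraph N) *ᵥ fun j : Fin N => pathMode q σ N (j : ℕ)) i
        + (q + q⁻¹ - 2) * pathMode q σ N i
      = (if (i : ℕ) = 0 then 1 else 0) + (if (i : ℕ) + 1 = N then σ else 0) := by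
  have hσq : σ * q ^ N ≠ 1 := by
    intro h
    have hlt : (q ^ N) ^ 2 < 1 :=
      pow_lt_one₀ (by positivity) (pow_lt_one₀ hq₀.le hq₁ i.pos.ne') two_ne_zero
    nlinarith [congrArg (· ^ 2) h]
  rw [lapm_pathGraph_mulVec_apply_of_recurrence (pathMode_add_one_add_pathMode_sub_one hq₀.ne'),
    pathMode_neg_one_sub_pathMode_zero hq₀.ne' hq₁.ne hσq,
    pathMode_last_sub_pathMode hq₀.ne' hq₁.ne hσ hσq]

theorem pathMode_last (hσ : σ ^ 2 = 1) : pathMode q σ N ((N : ℤ) - 1) = σ * pathMode q σ N 0 := by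
  simp only [pathMode, sub_self, zpow_zero, sub_zero]
  rw [mul_div_assoc']
  congr 1
  linear_combination (-q ^ ((N : ℤ) - 1)) * hσ

theorem pathMode_zero_of_pos (hq : q ≠ 0) (hN : N ≠ 0) :
    pathMode q σ N 0 = q * (1 + σ * q ^ (N - 1)) / ((1 - q) * (1 - σ * q ^ N)) := by
  obtain ⟨M, rfl⟩ := Nat.exists_eq_succ_of_ne_zero hN
  simp only [pathMode, sub_zero, Nat.cast_succ, add_sub_cancel_right, zpow_natCast,
    Nat.succ_sub_one, zpow_zero]
  field_simp

theorem div_one_sub_lt_pathMode_one_zero (hq₀ : 0 < q) (hq₁ : q < 1) (hN : N ≠ 0) :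
    q / (1 - q) < pathMode q 1 N 0 := by
  rw [pathMode_zero_of_pos hq₀.ne' hN, one_mul, one_mul, mul_div_mul_comm]
  have hqN : q ^ N < 1 := pow_lt_one₀ hq₀.le hq₁ hN
  refine lt_mul_of_one_lt_right (div_pos hq₀ (sub_pos.2 hq₁)) ?_
  rw [one_lt_div (by linarith)]
  linarith [pow_pos hq₀ (N - 1), pow_pos hq₀ N]

theorem pathMode_one_zero_le (hq₀ : 0 < q) (hq₁ : q < 1) (hN : 2 ≤ N) :
    pathMode q 1 N 0 ≤ q / (1 - q) ^ 2 := by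
  have hx : q ^ (N - 1) ≤ q := by
    simpa using pow_le_pow_of_le_one hq₀.le hq₁.le (show 1 ≤ N - 1 by omega)
  have hN' : q ^ N = q * q ^ (N - 1) := by rw [← pow_succ', Nat.sub_add_cancel (by omega)]
  have hd : 0 < 1 - q * q ^ (N - 1) := by nlinarith
  rw [pathMode_zero_of_pos hq₀.ne' (by omega), one_mul, one_mul, mul_div_mul_comm]
  calc q / (1 - q) * ((1 + q ^ (N - 1)) / (1 - q ^ N)) ≤ q / (1 - q) * (1 / (1 - q)) := by
        refine mul_le_mul_of_nonneg_left ?_ (div_pos hq₀ (sub_pos.2 hq₁)).le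
        rw [hN', div_le_div_iff₀ hd (sub_pos.2 hq₁)]
        nlinarith
    _ = q / (1 - q) ^ 2 := by rw [div_mul_div_comm, mul_one, sq]

theorem pathMode_neg_one_zero_nonneg (hq₀ : 0 < q) (hq₁ : q < 1) (hN : N ≠ 0) :
    0 ≤ pathMode q (-1) N 0 := by
  rw [pathMode_zero_of_pos hq₀.ne' hN]
  have hx : q ^ (N - 1) ≤ 1 := pow_le_one₀ hq₀.le hq₁.le
  have := pow_pos hq₀ N
  apply div_nonneg <;> nlinarith

theorem pathMode_neg_one_zero_lt (hq₀ : 0 < q) (hq₁ : q < 1) (hN : N ≠ 0) :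
    pathMode q (-1) N 0 < q / (1 - q) := by
  rw [pathMode_zero_of_pos hq₀.ne' hN, mul_div_mul_comm]
  refine mul_lt_of_lt_one_right (div_pos hq₀ (sub_pos.2 hq₁)) ?_
  rw [div_lt_one (by nlinarith [pow_pos hq₀ N])]
  linarith [pow_pos hq₀ (N - 1), pow_pos hq₀ N]

end pathMode

theorem two_sub_sqrt_three_mem_Ioo : 0 < 2 - √3 ∧ 2 - √3 < 1 := by
  have h₁ : 1 < √3 := by rw [Real.lt_sqrt] <;> norm_num
  have h₂ : √3 < 2 := by rw [Real.sqrt_lt'] <;> norm_num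
  constructor <;> linarith

theorem two_sub_sqrt_three_add_inv : (2 - √3) + (2 - √3)⁻¹ - 2 = 2 := by
  have h : (2 - √3) * (2 + √3) = 1 := by
    ring_nf; rw [Real.sq_sqrt (by norm_num)]; norm_num
  rw [inv_eq_of_mul_eq_one_right h]; ring

theorem three_sub_two_mul_sqrt_two_mem_Ioo : 0 < 3 - 2 * √2 ∧ 3 - 2 * √2 < 1 := by
  have h₁ : 1 < √2 := by rw [Real.lt_sqrt] <;> norm_num
  have h₂ : √2 < 3 / 2 := by rw [Real.sqrt_lt'] <;> norm_num
  constructor <;> linarith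

theorem three_sub_two_mul_sqrt_two_add_inv : (3 - 2 * √2) + (3 - 2 * √2)⁻¹ - 2 = 4 := by
  have h : (3 - 2 * √2) * (3 + 2 * √2) = 1 := by
    ring_nf; rw [Real.sq_sqrt (by norm_num)]; norm_num
  rw [inv_eq_of_mul_eq_one_right h]; ring

/-- On `C_4`, `e_0 = (1 + 2 v₂ + v₄) / 4` and `e_2 = (1 - 2 v₂ + v₄) / 4` with
`v₂ = ![1, 0, -1, 0]` and `v₄ = ![1, -1, 1, -1]`. -/
noncomputable def blockTowerPotential (N : ℕ) (p : Fin N × Fin 4) : ℝ :=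
  (((N : ℤ) - 1 - (p.1 : ℕ) : ℤ) : ℝ) * (fun _ => 1 / 4 : Fin 4 → ℝ) p.2
    + pathMode (2 - √3) 1 N (p.1 : ℕ) * ![1 / 2, 0, -(1 / 2), 0] p.2
    + pathMode (3 - 2 * √2) (-1) N (p.1 : ℕ) * ![1 / 4, -(1 / 4), 1 / 4, -(1 / 4)] p.2

theorem lapm_mulVec_blockTowerPotential {N : ℕ} (i₀ i₁ : Fin N) (h₀ : (i₀ : ℕ) = 0)
    (h₁ : (i₁ : ℕ) + 1 = N) :
    lapm (SimpleGraph.pathGraph N □ SimpleGraph.cycleGraph 4) *ᵥ blockTowerPotential N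
      = Pi.single (i₀, 0) 1 - Pi.single (i₁, 2) 1 := by
  set f₀ : Fin N → ℝ := fun j => (((N : ℤ) - 1 - (j : ℕ) : ℤ) : ℝ)
  set f₂ : Fin N → ℝ := fun j => pathMode (2 - √3) 1 N (j : ℕ)
  set f₄ : Fin N → ℝ := fun j => pathMode (3 - 2 * √2) (-1) N (j : ℕ)
  have hpot : blockTowerPotential N = (fun p => f₀ p.1 * (fun _ => 1 / 4 : Fin 4 → ℝ) p.2)
      + (fun p => f₂ p.1 * ![1 / 2, 0, -(1 / 2), 0] p.2)
      + (fun p => f₄ p.1 * ![1 / 4, -(1 / 4), 1 / 4, -(1 / 4)] p.2) := rfl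
  rw [hpot, mulVec_add, mulVec_add,
    lapm_boxProd_mulVec_of_mulVec_eq_smul _ ((lapm_mulVec_const _ _).trans (zero_smul ℝ _).symm),
    lapm_boxProd_mulVec_of_mulVec_eq_smul _ (lapm_cycleGraph_four_mulVec_two _),
    lapm_boxProd_mulVec_of_mulVec_eq_smul _ (lapm_cycleGraph_four_mulVec_four _)]
  ext ⟨i, b⟩
  have e₀ : (lapm (SimpleGraph.pathGraph N) *ᵥ f₀) i
      = (if (i : ℕ) = 0 then 1 else 0) - (if (i : ℕ) + 1 = N then 1 else 0) :=
    lapm_pathGraph_mulVec_linear i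
  have e₂ : (lapm (SimpleGraph.pathGraph N) *ᵥ f₂) i + 2 * f₂ i
      = (if (i : ℕ) = 0 then 1 else 0) + (if (i : ℕ) + 1 = N then 1 else 0) := by
    have h := lapm_pathGraph_mulVec_pathMode two_sub_sqrt_three_mem_Ioo.1
      two_sub_sqrt_three_mem_Ioo.2 (one_pow 2) i
    rwa [two_sub_sqrt_three_add_inv] at h
  have e₄ : (lapm (SimpleGraph.pathGraph N) *ᵥ f₄) i + 4 * f₄ i
      = (if (i : ℕ) = 0 then 1 else 0) + (if (i : ℕ) + 1 = N then -1 else 0) := by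
    have h := lapm_pathGraph_mulVec_pathMode (σ := -1) three_sub_two_mul_sqrt_two_mem_Ioo.1
      three_sub_two_mul_sqrt_two_mem_Ioo.2 (by norm_num) i
    rwa [three_sub_two_mul_sqrt_two_add_inv] at h
  simp only [Pi.add_apply, Pi.sub_apply, zero_mul, add_zero, e₀, e₂, e₄, Pi.single_apply,
    Prod.ext_iff, Fin.ext_iff, h₀, show (i : ℕ) = i₁ ↔ (i : ℕ) + 1 = N by omega]
  fin_cases b <;> simp <;> split_ifs <;> norm_num

theorem resDist_pathGraph_boxProd_cycleGraph_four {N : ℕ} (i₀ i₁ : Fin N) (h₀ : (i₀ : ℕ) = 0)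
    (h₁ : (i₁ : ℕ) + 1 = N) :
    resDist (SimpleGraph.pathGraph N □ SimpleGraph.cycleGraph 4) (i₀, 0) (i₁, 2)
      = ((N : ℝ) - 1) / 4 + pathMode (2 - √3) 1 N 0 + pathMode (3 - 2 * √2) (-1) N 0 / 2 := by
  rw [resDist_eq_sub_of_mulVec_eq (lapm_mulVec_blockTowerPotential i₀ i₁ h₀ h₁)]
  have hi₁ : ((i₁ : ℕ) : ℤ) = (N : ℤ) - 1 := by omega
  simp only [blockTowerPotential, h₀, hi₁, pathMode_last (one_pow 2),
    pathMode_last (show (-1 : ℝ) ^ 2 = 1 by norm_num), Nat.cast_zero, sub_zero, sub_self,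
    Int.cast_sub, Int.cast_natCast, Int.cast_one, Int.cast_zero, cons_val_zero, Matrix.cons_val]
  ring

theorem blockTower_gap :
    (2 - √3) / (1 - (2 - √3)) ^ 2 - (2 - √3) / (1 - (2 - √3))
      + (3 - 2 * √2) / (1 - (3 - 2 * √2)) / 2 < 1 / 4 := by
  have h3 : √3 ^ 2 = 3 := Real.sq_sqrt (by norm_num)
  have h2 : √2 ^ 2 = 2 := Real.sq_sqrt (by norm_num)
  have h3₀ : 1.73 < √3 := by rw [Real.lt_sqrt] <;> norm_num
  have h2₀ : √2 < 1.42 := by rw [Real.sqrt_lt'] <;> norm_num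
  have e₁ : (2 - √3) / (1 - (2 - √3)) ^ 2 = 1 / 2 := by
    rw [div_eq_iff (by nlinarith)]; nlinarith
  have e₂ : (2 - √3) / (1 - (2 - √3)) = (√3 - 1) / 2 := by
    rw [div_eq_iff (by nlinarith)]; nlinarith
  have e₃ : (3 - 2 * √2) / (1 - (3 - 2 * √2)) = (√2 - 1) / 2 := by
    rw [div_eq_iff (by nlinarith)]; nlinarith
  rw [e₁, e₂, e₃]
  linarith

/-- In the block tower graphs `G_n = P_n □ C_4`, the resistance distance between
`(a_1,b_1)` and `(a_n,b_3)` is strictly increasing in `n`. -/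
theorem resDist_blockTower_strictMono (n : ℕ) (hn : 2 ≤ n) :
    resDist ((SimpleGraph.pathGraph (n + 1)).boxProd (SimpleGraph.cycleGraph 4))
        (⟨0, by omega⟩, 0) (⟨n, by omega⟩, 2)
      > resDist ((SimpleGraph.pathGraph n).boxProd (SimpleGraph.cycleGraph 4))
          (⟨0, by omega⟩, 0) (⟨n - 1, by omega⟩, 2) := by
  obtain ⟨hr₀, hr₁⟩ := two_sub_sqrt_three_mem_Ioo
  obtain ⟨hs₀, hs₁⟩ := three_sub_two_mul_sqrt_two_mem_Ioo
  rw [resDist_pathGraph_boxProd_cycleGraph_four _ _ rfl rfl,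
    resDist_pathGraph_boxProd_cycleGraph_four _ _ rfl (Nat.sub_add_cancel (by omega))]
  have hE₁ := div_one_sub_lt_pathMode_one_zero hr₀ hr₁ n.succ_ne_zero
  have hE₀ := pathMode_one_zero_le hr₀ hr₁ hn
  have hO₁ := pathMode_neg_one_zero_nonneg hs₀ hs₁ n.succ_ne_zero
  have hO₀ := pathMode_neg_one_zero_lt hs₀ hs₁ (by omega : n ≠ 0)
  have hgap := blockTower_gap
  push_cast
  linarith
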